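/- The min-max number of any argument in a strongly admissible labelling of a framework with n arguments is at most 2n: if Lab is strongly admissible with min-max numbering MM and |Ar| = n, then MM(x) ≤ 2n for every in/out-labelled argument x. -/

import Mathlib

inductive Label where
  | inn | out | und
deriving DecidableEq

/-- A labelling is admissible if every in-labelled argument has all its attackers
labelled out, and every out-labelled argument has at least one in-labelled attacker. -/
def Admissible {Ar : Type*} (att : Ar → Ar → Prop) (L : Ar → Label) : Prop :=
  (∀ x, L x = Label.inn → ∀ y, att y x → L y = Label.out) ∧
  (∀ x, L x = Label.out → ∃ y, att y x ∧ L y = Label.inn)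

/-- A min-max numbering (with only natural-number values): in-arguments are numbered
1 + max of the numbers of their out-labelled attackers (max ∅ = 0), and out-arguments
1 + min of the numbers of their in-labelled attackers. -/
def IsMinMax {Ar : Type*} (att : Ar → Ar → Prop) (L : Ar → Label) (MM : Ar → ℕ) : Prop :=
  (∀ x, L x = Label.inn → MM x = sSup (MM '' {y | att y x ∧ L y = Label.out}) + 1) ∧
  (∀ x, L x = Label.out → MM x = sInf (MM '' {y | att y x ∧ L y = Label.inn}) + 1)

/-- Strongly admissible: admissible and admitting a min-max numbering with only
natural-number (finite) values. -/
def StronglyAdmissible {Ar : Type*} (att : Ar → Ar → Prop) (L : Ar → Label) : Prop :=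
  Admissible att L ∧ ∃ MM : Ar → ℕ, IsMinMax att L MM

/-- Complete labelling: admissible, and every undec argument has an undec attacker
and no in-labelled attacker. -/
def CompleteLab {Ar : Type*} (att : Ar → Ar → Prop) (L : Ar → Label) : Prop :=
  Admissible att L ∧
  ∀ x, L x = Label.und →
    (∃ y, att y x ∧ L y = Label.und) ∧ ∀ y, att y x → L y ≠ Label.inn

/-- The order on labellings: Lab1 ⊑ Lab2 iff in(Lab1) ⊆ in(Lab2) and out(Lab1) ⊆ out(Lab2). -/
def LabLe {Ar : Type*} (L1 L2 : Ar → Label) : Prop :=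
  (∀ x, L1 x = Label.inn → L2 x = Label.inn) ∧
  (∀ x, L1 x = Label.out → L2 x = Label.out)

/-!
Along the numbering, every in-argument numbered `k > 1` has an out-attacker numbered `k - 1`
(the maximum over a finite set is attained) and every out-argument numbered `k` has an
in-attacker numbered `k - 1` (the minimum is attained). Hence all of `1, …, MM x` occur as
numbers of arguments, so `MM x` is at most the number of arguments.
-/

namespace IsMinMax

variable {Ar : Type*} {att : Ar → Ar → Prop} {Lab : Ar → Label} {MM : Ar → ℕ}

theorem exists_out_attacker_succ_eq [Finite Ar] (hmm : IsMinMax att Lab MM) {x : Ar}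
    (hx : Lab x = Label.inn) (h : 1 < MM x) :
    ∃ y, att y x ∧ Lab y = Label.out ∧ MM y + 1 = MM x := by
  have hx' := hmm.1 x hx
  obtain hempty | hne := (MM '' {y | att y x ∧ Lab y = Label.out}).eq_empty_or_nonempty
  · rw [hempty, csSup_empty, Nat.bot_eq_zero] at hx'
    omega
  · obtain ⟨y, ⟨hatt, hy⟩, hmax⟩ := Nat.sSup_mem hne (Set.toFinite _).bddAbove
    exact ⟨y, hatt, hy, by omega⟩

theorem exists_inn_attacker_succ_eq (hadm : Admissible att Lab) (hmm : IsMinMax att Lab MM)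
    {x : Ar} (hx : Lab x = Label.out) :
    ∃ y, att y x ∧ Lab y = Label.inn ∧ MM y + 1 = MM x := by
  obtain ⟨z, hatt, hz⟩ := hadm.2 x hx
  obtain ⟨y, ⟨hatt, hy⟩, hmin⟩ := Nat.sInf_mem (⟨MM z, z, ⟨hatt, hz⟩, rfl⟩ :
    (MM '' {y | att y x ∧ Lab y = Label.inn}).Nonempty)
  exact ⟨y, hatt, hy, by rw [hmm.2 x hx, hmin]⟩

theorem exists_pred_eq [Finite Ar] (hadm : Admissible att Lab) (hmm : IsMinMax att Lab MM)
    {x : Ar} (hx : Lab x ≠ Label.und) (h : 1 < MM x) :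
    ∃ y, Lab y ≠ Label.und ∧ MM y + 1 = MM x := by
  cases hlab : Lab x with
  | inn =>
    obtain ⟨y, -, hy, hMM⟩ := hmm.exists_out_attacker_succ_eq hlab h
    exact ⟨y, by simp [hy], hMM⟩
  | out =>
    obtain ⟨y, -, hy, hMM⟩ := hmm.exists_inn_attacker_succ_eq hadm hlab
    exact ⟨y, by simp [hy], hMM⟩
  | und => exact absurd hlab hx

theorem exists_eq_of_le [Finite Ar] (hadm : Admissible att Lab) (hmm : IsMinMax att Lab MM)
    {x : Ar} (hx : Lab x ≠ Label.und) {v : ℕ} (hv : 1 ≤ v) (hvx : v ≤ MM x) :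
    ∃ y, Lab y ≠ Label.und ∧ MM y = v := by
  induction hk : MM x - v generalizing x with
  | zero => exact ⟨x, hx, by omega⟩
  | succ k ih =>
    obtain ⟨y, hy, hMM⟩ := hmm.exists_pred_eq hadm hx (by omega)
    exact ih hy (by omega) (by omega)

theorem le_card [Fintype Ar] (hadm : Admissible att Lab) (hmm : IsMinMax att Lab MM)
    {x : Ar} (hx : Lab x ≠ Label.und) : MM x ≤ Fintype.card Ar := by
  classical
  have hsub : Finset.Icc 1 (MM x) ⊆ Finset.univ.image MM := fun v hv => by
    obtain ⟨hv1, hvx⟩ := Finset.mem_Icc.mp hv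
    obtain ⟨y, -, hy⟩ := hmm.exists_eq_of_le hadm hx hv1 hvx
    exact Finset.mem_image.mpr ⟨y, Finset.mem_univ y, hy⟩
  calc MM x = (Finset.Icc 1 (MM x)).card := by simp
    _ ≤ (Finset.univ.image MM).card := Finset.card_le_card hsub
    _ ≤ Fintype.card Ar := Finset.card_image_le

end IsMinMax

/-- In a strongly admissible labelling of a framework with n arguments,
every in/out argument has min-max number at most 2n. -/
theorem minMax_le_two_card
    {Ar : Type*} [Fintype Ar] (att : Ar → Ar → Prop) (Lab : Ar → Label) (MM : Ar → ℕ)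
    (hadm : Admissible att Lab) (hmm : IsMinMax att Lab MM) (n : ℕ)
    (hcard : Fintype.card Ar = n) :
    ∀ x, Lab x ≠ Label.und → MM x ≤ 2 * n := fun x hx => by
  have := hmm.le_card hadm hx
  omega
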